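/- Let α be an inversion sequence of length n and let γ ∈ H(α). Then (a) Asc_0(γ) = Asc_0(α), (b) wDes(γ) = wDes(α), and (c) rlMinP(γ) = rlMinP(α). -/

import Mathlib

/-- Entry of the word `w` at (1-based) position `i`. -/
def ent (w : List ℕ) (i : ℕ) : ℕ := w.getD (i - 1) 0

/-- `w` is an endofunction of `{1,…,n}`, where `n = w.length`. -/
def IsEndo (w : List ℕ) : Prop := ∀ x ∈ w, 1 ≤ x ∧ x ≤ w.length

/-- `w` is an inversion sequence. -/
def IsInvSeq (w : List ℕ) : Prop :=
  ∀ i ∈ Finset.Icc 1 w.length, 1 ≤ ent w i ∧ ent w i ≤ i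

/-- The set of `d`-ascents of `w` (1-based positions): position `1` is always a
`d`-ascent, and `i ≥ 2` is a `d`-ascent if `a_i > a_{i-1} - d`. -/
def ascSet (d : ℕ) (w : List ℕ) : Finset ℕ :=
  (Finset.Icc 1 w.length).filter fun i => i = 1 ∨ ent w (i - 1) < ent w i + d

/-- The number of `d`-ascents of `w`. -/
def ascCard (d : ℕ) (w : List ℕ) : ℕ := (ascSet d w).card

/-- `w` is a `d`-ascent sequence. -/
def IsDAscSeq (d : ℕ) (w : List ℕ) : Prop :=
  IsEndo w ∧ ∀ i ∈ Finset.Icc 1 w.length, ent w i ≤ 1 + ascCard d (w.take (i - 1))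

/-- One step of the map `M`: add one to every entry strictly to the left of
position `j` that is weakly larger than the entry in position `j`. -/
def Mstep (w : List ℕ) (j : ℕ) : List ℕ :=
  w.mapIdx fun k x => if k + 1 < j ∧ ent w j ≤ x then x + 1 else x

/-- The `d`-hat map: apply `Mstep` successively at the `d`-ascents of `w`,
listed in increasing order. -/
def hatd (d : ℕ) (w : List ℕ) : List ℕ :=
  ((ascSet d w).sort (· ≤ ·)).foldl Mstep w

/-- Largest entry of `w`. -/
def maxEnt (w : List ℕ) : ℕ := w.foldr max 0

/-- `w` is a Cayley permutation: its image is `{1,…,max w}`. -/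
def IsCayley (w : List ℕ) : Prop := ∀ x, x ∈ w ↔ (1 ≤ x ∧ x ≤ maxEnt w)

open Classical in
/-- The set of positions of leftmost copies of the values of `w`. -/
noncomputable def nubSet (w : List ℕ) : Finset ℕ :=
  (Finset.Icc 1 w.length).filter fun i =>
    ∀ j ∈ Finset.Icc 1 w.length, ent w j = ent w i → i ≤ j

/-- The least `d` such that `w` is a `d`-ascent sequence. -/
noncomputable def mind (w : List ℕ) : ℕ := sInf {d | IsDAscSeq d w}

/-- The set `H(w)` of all the (meaningful) `d`-hats of `w`. -/
def Hset (w : List ℕ) : Set (List ℕ) := {x | ∃ d, mind w ≤ d ∧ x = hatd d w}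

/-- The max-hat map. -/
def hatmax (w : List ℕ) : List ℕ := hatd (w.length - 1) w

/-- Weak descent set of `w`. -/
def wDesSet (w : List ℕ) : Finset ℕ :=
  (Finset.Icc 2 w.length).filter fun i => ent w i ≤ ent w (i - 1)

/-- The number of weak descents of `w`. -/
def wdes (w : List ℕ) : ℕ := (wDesSet w).card

/-- `i` is a right-left minimum index of `w`. -/
def IsRLMinIdx (w : List ℕ) (i : ℕ) : Prop :=
  1 ≤ i ∧ i ≤ w.length ∧ ∀ j, i < j → j ≤ w.length → ent w i < ent w j

/-- The set of right-left minima pairs of `w`. -/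
def rlMinP (w : List ℕ) : Set (ℕ × ℕ) :=
  {p | IsRLMinIdx w p.1 ∧ p.2 = ent w p.1}

/-- `w` is the word of a permutation of `{1,…,n}`, where `n = w.length`. -/
def IsPermWord (w : List ℕ) : Prop :=
  w.Nodup ∧ ∀ x ∈ w, 1 ≤ x ∧ x ≤ w.length

/-- Add one to every entry of `w` that is `≥ a`. -/
def plus (w : List ℕ) (a : ℕ) : List ℕ :=
  w.map fun x => if a ≤ x then x + 1 else x

/-- Add one to every entry of `w` that is `≥ a`, then append `a` at the end. -/
def plusApp (w : List ℕ) (a : ℕ) : List ℕ := plus w a ++ [a]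

/-- The index of the maximal increasing run of `w` containing position `i`:
one plus the number of descents up to position `i`. -/
def irIdx (w : List ℕ) (i : ℕ) : ℕ :=
  1 + ((Finset.Icc 2 i).filter fun j => ent w j < ent w (j - 1)).card

/-- `w` is ir-subdiagonal: every entry `c` in the `i`th maximal increasing run
satisfies `c ≤ n + 1 - i`. -/
def IsIrSub (w : List ℕ) : Prop :=
  ∀ i ∈ Finset.Icc 1 w.length, ent w i + irIdx w i ≤ w.length + 1

/-- The index of the maximal decreasing run of `w` containing position `i`. -/
def drIdx (w : List ℕ) (i : ℕ) : ℕ :=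
  1 + ((Finset.Icc 2 i).filter fun j => ent w (j - 1) < ent w j).card

/-- `w` is dr-subdiagonal: every entry `c` in the `i`th maximal decreasing run
satisfies `c ≤ n + 1 - i`. -/
def IsDrSub (w : List ℕ) : Prop :=
  ∀ i ∈ Finset.Icc 1 w.length, ent w i + drIdx w i ≤ w.length + 1

/-- `w` is a weak descent sequence. -/
def IsWDesSeq (w : List ℕ) : Prop :=
  IsInvSeq w ∧ ∀ i ∈ Finset.Icc 1 w.length, ent w i ≤ 1 + wdes (w.take (i - 1))

/-- `w` is a primitive ascent sequence: an ascent sequence with no flat steps. -/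
def IsPrimAscSeq (w : List ℕ) : Prop :=
  IsDAscSeq 0 w ∧ ∀ i ∈ Finset.Icc 1 (w.length - 1), ent w i ≠ ent w (i + 1)

/-- Insert position `i` into a list of positions sorted by the Burge order:
ascending entries, ties broken by descending position. -/
def bInsert (w : List ℕ) (i : ℕ) : List ℕ → List ℕ
  | [] => [i]
  | j :: t =>
      if ent w i < ent w j ∨ (ent w i = ent w j ∧ j ≤ i) then i :: j :: t
      else j :: bInsert w i t

/-- The permutation `burget w` obtained from the Burge transpose of the biword
with top row `1,…,n` and bottom row `w`: sort the positions `1,…,n` in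
ascending order of their entries, breaking ties in descending order of
position. -/
def burget (w : List ℕ) : List ℕ :=
  ((List.range w.length).map (· + 1)).foldr (bInsert w) []


lemma length_Mstep (w : List ℕ) (j : ℕ) : (Mstep w j).length = w.length := by
  simp [Mstep]

lemma ent_Mstep (w : List ℕ) (j i : ℕ) (h1 : 1 ≤ i) (h2 : i ≤ w.length) :
    ent (Mstep w j) i = if i < j ∧ ent w j ≤ ent w i then ent w i + 1 else ent w i := by
  have hlt : i - 1 < w.length := by omega
  have hw : w[i-1]? = some w[i-1] := List.getElem?_eq_getElem hlt
  have hei : ent w i = w[i-1] := by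
    simp [ent, List.getD_eq_getElem?_getD, hw]
  rw [ent, Mstep, List.getD_eq_getElem?_getD, List.getElem?_mapIdx, hw]
  have hidx : i - 1 + 1 = i := by omega
  simp only [Option.map_some, Option.getD_some, hidx, hei]

lemma cmp_Mstep (w : List ℕ) (j i : ℕ) (h1 : 2 ≤ i) (h2 : i ≤ w.length) :
    (ent (Mstep w j) (i-1) < ent (Mstep w j) i ↔ ent w (i-1) < ent w i) := by
  rw [ent_Mstep w j (i-1) (by omega) (by omega), ent_Mstep w j i (by omega) h2]
  rcases lt_trichotomy i j with h | h | h
  · split_ifs <;> omega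
  · subst h
    split_ifs <;> omega
  · split_ifs <;> omega

lemma length_foldl_Mstep (L : List ℕ) : ∀ w : List ℕ, (L.foldl Mstep w).length = w.length := by
  induction L with
  | nil => intro w; rfl
  | cons j L ih => intro w; rw [List.foldl_cons, ih, length_Mstep]

lemma cmp_foldl_Mstep (L : List ℕ) : ∀ w : List ℕ, ∀ i : ℕ, 2 ≤ i → i ≤ w.length →
    (ent (L.foldl Mstep w) (i-1) < ent (L.foldl Mstep w) i ↔ ent w (i-1) < ent w i) := by
  induction L with
  | nil => intro w i _ _; exact Iff.rfl
  | cons j L ih =>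
    intro w i h1 h2
    rw [List.foldl_cons, ih (Mstep w j) i h1 (by rw [length_Mstep]; exact h2),
      cmp_Mstep w j i h1 h2]

lemma rlmin_Mstep (w : List ℕ) (j : ℕ) (hj : j ≤ w.length) (i : ℕ) :
    IsRLMinIdx (Mstep w j) i ↔ IsRLMinIdx w i := by
  unfold IsRLMinIdx
  rw [length_Mstep]
  constructor
  · rintro ⟨h1, h2, h3⟩
    refine ⟨h1, h2, fun k hk hk2 => ?_⟩
    have hik := h3 k hk hk2
    rw [ent_Mstep w j i (by omega) h2, ent_Mstep w j k (by omega) hk2] at hik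
    split_ifs at hik <;> omega
  · rintro ⟨h1, h2, h3⟩
    refine ⟨h1, h2, fun k hk hk2 => ?_⟩
    have hik := h3 k hk hk2
    rw [ent_Mstep w j i (by omega) h2, ent_Mstep w j k (by omega) hk2]
    by_cases hij : i < j
    · have hcj := h3 j hij hj
      split_ifs <;> omega
    · split_ifs <;> omega

lemma ent_Mstep_rlmin (w : List ℕ) (j i : ℕ) (hj : j ≤ w.length) (h : IsRLMinIdx w i) :
    ent (Mstep w j) i = ent w i := by
  obtain ⟨h1, h2, h3⟩ := h
  rw [ent_Mstep w j i h1 h2]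
  by_cases hij : i < j
  · have := h3 j hij hj
    split_ifs <;> omega
  · split_ifs <;> omega

lemma rlminP_Mstep (w : List ℕ) (j : ℕ) (hj : j ≤ w.length) :
    rlMinP (Mstep w j) = rlMinP w := by
  ext ⟨i, v⟩
  simp only [rlMinP, Set.mem_setOf_eq, rlmin_Mstep w j hj i]
  constructor
  · rintro ⟨h, rfl⟩
    exact ⟨h, ent_Mstep_rlmin w j i hj h⟩
  · rintro ⟨h, rfl⟩
    exact ⟨h, (ent_Mstep_rlmin w j i hj h).symm⟩

lemma rlminP_foldl_Mstep (L : List ℕ) : ∀ w : List ℕ, (∀ j ∈ L, j ≤ w.length) →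
    rlMinP (L.foldl Mstep w) = rlMinP w := by
  induction L with
  | nil => intro w _; rfl
  | cons j L ih =>
    intro w hL
    rw [List.foldl_cons,
      ih (Mstep w j) (fun k hk => by rw [length_Mstep]; exact hL k (List.mem_cons_of_mem _ hk)),
      rlminP_Mstep w j (hL j (List.mem_cons_self))]

/-- for an inversion sequence `α` and any `γ ∈ H(α)`:
(a) `Asc_0(γ) = Asc_0(α)`, (b) `wDes(γ) = wDes(α)`,
(c) `rlMinP(γ) = rlMinP(α)`. -/
theorem stmt11 (w : List ℕ) (hw : IsInvSeq w) (g : List ℕ) (hg : g ∈ Hset w) :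
    ascSet 0 g = ascSet 0 w ∧ wDesSet g = wDesSet w ∧ rlMinP g = rlMinP w := by
  obtain ⟨d, _, rfl⟩ := hg
  have hg' : hatd d w = ((ascSet d w).sort (· ≤ ·)).foldl Mstep w := rfl
  set L := (ascSet d w).sort (· ≤ ·) with hLdef
  have hmem : ∀ j ∈ L, j ≤ w.length := by
    intro j hj
    rw [hLdef, Finset.mem_sort] at hj
    exact (Finset.mem_Icc.1 (Finset.mem_filter.1 hj).1).2
  have hlen : (hatd d w).length = w.length := by
    rw [hg']; exact length_foldl_Mstep L w
  have hcmp : ∀ i : ℕ, 2 ≤ i → i ≤ w.length →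
      (ent (hatd d w) (i-1) < ent (hatd d w) i ↔ ent w (i-1) < ent w i) := by
    intro i h1 h2
    rw [hg']
    exact cmp_foldl_Mstep L w i h1 h2
  refine ⟨?_, ?_, ?_⟩
  · ext i
    simp only [ascSet, Finset.mem_filter, Finset.mem_Icc, hlen, Nat.add_zero]
    constructor
    · rintro ⟨hi, h⟩
      refine ⟨hi, ?_⟩
      by_cases h1 : i = 1
      · exact Or.inl h1
      · rcases h with h | h
        · exact Or.inl h
        · exact Or.inr ((hcmp i (by omega) hi.2).1 h)
    · rintro ⟨hi, h⟩
      refine ⟨hi, ?_⟩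
      by_cases h1 : i = 1
      · exact Or.inl h1
      · rcases h with h | h
        · exact Or.inl h
        · exact Or.inr ((hcmp i (by omega) hi.2).2 h)
  · ext i
    simp only [wDesSet, Finset.mem_filter, Finset.mem_Icc, hlen]
    constructor
    · rintro ⟨hi, h⟩
      refine ⟨hi, ?_⟩
      rw [← not_lt] at h ⊢
      exact fun hc => h ((hcmp i hi.1 hi.2).2 hc)
    · rintro ⟨hi, h⟩
      refine ⟨hi, ?_⟩
      rw [← not_lt] at h ⊢
      exact fun hc => h ((hcmp i hi.1 hi.2).1 hc)
  · rw [hg']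
    exact rlminP_foldl_Mstep L w hmem
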